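/- Let F be a lifting of a degree-one continuous circle map. Then the map α ↦ ρ(F_α) from [0, ‖F − F_l‖_∞] to the rotation interval Rot(F) = [ρ(F_l), ρ(F_u)] is continuous, non-decreasing, and surjective. In particular, for every ρ in Rot(F) there exists α with ρ(F_α) = ρ. -/

import Mathlib

open Filter

noncomputable def lowerLift (F : ℝ → ℝ) (x : ℝ) : ℝ := sInf (F '' Set.Ici x)

noncomputable def upperLift (F : ℝ → ℝ) (x : ℝ) : ℝ := sSup (F '' Set.Iic x)

noncomputable def supDiff (F : ℝ → ℝ) : ℝ := ⨆ x : ℝ, (F x - lowerLift F x)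

noncomputable def water (F : ℝ → ℝ) (α : ℝ) : ℝ → ℝ :=
  upperLift (fun y => min (F y) (lowerLift F y + α))

/-! Each water function `F_α` is continuous, non-decreasing and commutes with `x ↦ x + 1`, so it
is a `CircleDeg1Lift` whose translation number is `rot α`. Since `F_α` increases with `α`, so does
`rot`. Since `F_α x` is 1-Lipschitz in `α` uniformly in `x`, every `α ↦ F_αⁿ(0)` is continuous, and
`|F_αⁿ(0) - n ρ(F_α)| ≤ 1` makes `α ↦ F_αⁿ(0) / n` converge to `rot` uniformly; so `rot` is
continuous and the intermediate value theorem gives surjectivity. -/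

open Set Function CircleDeg1Lift

theorem upperLift_le_upperLift_add {h₁ h₂ : ℝ → ℝ} {x c : ℝ} (hle : ∀ y, h₁ y ≤ h₂ y + c)
    (hb : BddAbove (h₂ '' Iic x)) : upperLift h₁ x ≤ upperLift h₂ x + c :=
  csSup_le (nonempty_Iic.image h₁) <| by
    rintro _ ⟨y, hy, rfl⟩
    exact (hle y).trans (by gcongr; exact le_csSup hb (mem_image_of_mem h₂ hy))

theorem lowerLift_eq_neg_upperLift (h : ℝ → ℝ) (x : ℝ) :
    lowerLift h x = -upperLift (fun y => -h (-y)) (-x) := by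
  rw [lowerLift, Real.sInf_def, upperLift]
  congr 2
  ext z
  simp only [Set.mem_neg, mem_image, mem_Ici, mem_Iic]
  constructor
  · rintro ⟨y, hy, hyz⟩
    exact ⟨-y, neg_le_neg hy, by rw [neg_neg, hyz, neg_neg]⟩
  · rintro ⟨y, hy, rfl⟩
    exact ⟨-y, le_neg_of_le_neg hy, by rw [neg_neg]⟩

theorem bddAbove_image_sub_Icc {h : ℝ → ℝ} (hc : Continuous h) (x : ℝ) :
    BddAbove ((fun t => h (x - t)) '' Icc 0 1) :=
  (isCompact_Icc.image (hc.comp (continuous_sub_left x))).bddAbove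

section DegreeOne

variable {h : ℝ → ℝ} (hd : ∀ x, h (x + 1) = h x + 1)
include hd

theorem apply_add_intCast (x : ℝ) (m : ℤ) : h (x + m) = h x + m := by
  have hp : Periodic (fun y => h y - y) 1 := fun y => by simp only [hd]; ring
  have := hp.int_mul m x
  simp only [mul_one] at this
  linarith

theorem exists_mem_Icc_le_apply_sub {x y : ℝ} (hy : y ≤ x) :
    ∃ t ∈ Icc (0 : ℝ) 1, h y ≤ h (x - t) := by
  refine ⟨Int.fract (x - y), ⟨Int.fract_nonneg _, (Int.fract_lt_one _).le⟩, ?_⟩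
  have hfloor : (0 : ℝ) ≤ ⌊x - y⌋ := mod_cast Int.floor_nonneg.2 (sub_nonneg.2 hy)
  rw [show x - Int.fract (x - y) = y + ⌊x - y⌋ by rw [Int.fract]; ring, apply_add_intCast hd]
  linarith

theorem neg_apply_neg_add_one (y : ℝ) : -h (-(y + 1)) = -h (-y) + 1 := by
  have := hd (-(y + 1))
  rw [show -(y + 1) + 1 = -y by ring] at this
  linarith

variable (hc : Continuous h)
include hc

theorem bddAbove_image_Iic (x : ℝ) : BddAbove (h '' Iic x) := by
  obtain ⟨C, hC⟩ := bddAbove_image_sub_Icc hc x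
  refine ⟨C, ?_⟩
  rintro _ ⟨y, hy, rfl⟩
  obtain ⟨t, ht, hle⟩ := exists_mem_Icc_le_apply_sub hd hy
  exact hle.trans (hC ⟨t, ht, rfl⟩)

theorem upperLift_eq_sSup_image_Icc (x : ℝ) :
    upperLift h x = sSup ((fun t => h (x - t)) '' Icc 0 1) := by
  apply le_antisymm
  · refine csSup_le (nonempty_Iic.image h) ?_
    rintro _ ⟨y, hy, rfl⟩
    obtain ⟨t, ht, hle⟩ := exists_mem_Icc_le_apply_sub hd hy
    exact hle.trans (le_csSup (bddAbove_image_sub_Icc hc x) ⟨t, ht, rfl⟩)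
  · refine csSup_le ((nonempty_Icc.2 zero_le_one).image _) ?_
    rintro _ ⟨t, ht, rfl⟩
    exact le_csSup (bddAbove_image_Iic hd hc x) ⟨x - t, sub_le_self x ht.1, rfl⟩

theorem continuous_upperLift : Continuous (upperLift h) := by
  rw [funext (upperLift_eq_sSup_image_Icc hd hc)]
  exact isCompact_Icc.continuous_sSup (hc.comp continuous_sub)

theorem monotone_upperLift : Monotone (upperLift h) := fun _ b hab =>
  csSup_le_csSup (bddAbove_image_Iic hd hc b) (nonempty_Iic.image h)
    (image_mono (Iic_subset_Iic.2 hab))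

theorem apply_le_upperLift {x y : ℝ} (hy : y ≤ x) : h y ≤ upperLift h x :=
  le_csSup (bddAbove_image_Iic hd hc x) (mem_image_of_mem h hy)

theorem upperLift_add_one (x : ℝ) : upperLift h (x + 1) = upperLift h x + 1 := by
  apply le_antisymm
  · refine csSup_le (nonempty_Iic.image h) ?_
    rintro _ ⟨y, hy, rfl⟩
    have := hd (y - 1)
    rw [sub_add_cancel] at this
    linarith [apply_le_upperLift hd hc (show y - 1 ≤ x by linarith [mem_Iic.1 hy])]
  · refine le_sub_iff_add_le.1 (csSup_le (nonempty_Iic.image h) ?_)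
    rintro _ ⟨y, hy, rfl⟩
    linarith [hd y, apply_le_upperLift hd hc (show y + 1 ≤ x + 1 by linarith [mem_Iic.1 hy])]

theorem lowerLift_add_one (x : ℝ) : lowerLift h (x + 1) = lowerLift h x + 1 := by
  have := upperLift_add_one (h := fun y => -h (-y)) (neg_apply_neg_add_one hd) (by fun_prop) (-(x + 1))
  rw [show -(x + 1) + 1 = -x by ring] at this
  rw [lowerLift_eq_neg_upperLift, lowerLift_eq_neg_upperLift]
  linarith

theorem continuous_lowerLift : Continuous (lowerLift h) := by
  rw [funext (lowerLift_eq_neg_upperLift h)]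
  exact ((continuous_upperLift (h := fun y => -h (-y)) (neg_apply_neg_add_one hd) (by fun_prop)).comp continuous_neg).neg

theorem lowerLift_le (x : ℝ) : lowerLift h x ≤ h x := by
  rw [lowerLift_eq_neg_upperLift, neg_le]
  simpa using apply_le_upperLift (h := fun y => -h (-y)) (neg_apply_neg_add_one hd) (by fun_prop) (le_refl (-x))

end DegreeOne

theorem CircleDeg1Lift.continuous_translationNumber_comp {X : Type*} [TopologicalSpace X]
    {f : X → CircleDeg1Lift} (hf : ∀ n : ℕ, Continuous fun a => (f a ^ n) 0) :
    Continuous fun a => (f a).translationNumber := by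
  refine TendstoUniformly.continuous (F := fun (n : ℕ) a => (f a ^ n) 0 / n) (p := atTop) ?_
    (Eventually.of_forall fun n => (hf n).div_const _).frequently
  rw [Metric.tendstoUniformly_iff]
  intro ε hε
  obtain ⟨N, hN⟩ := exists_nat_gt ε⁻¹
  filter_upwards [eventually_gt_atTop N] with n hn a
  have hn' : ε⁻¹ < n := hN.trans (mod_cast hn)
  have hnpos : (0 : ℝ) < n := (inv_pos.2 hε).trans hn'
  calc dist (f a).translationNumber ((f a ^ n) 0 / n)
      = dist ((f a ^ n) 0) (n * (f a).translationNumber) / n := by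
        rw [dist_comm, Real.dist_eq, Real.dist_eq, ← abs_of_pos hnpos, ← abs_div, abs_of_pos hnpos,
          sub_div, mul_div_cancel_left₀ _ hnpos.ne']
    _ ≤ 1 / n := by gcongr; exact (f a).dist_pow_map_zero_mul_translationNumber_le n
    _ < ε := by rw [one_div]; exact inv_lt_of_inv_lt₀ hε hn'

noncomputable def waterTrunc (F : ℝ → ℝ) (α y : ℝ) : ℝ := min (F y) (lowerLift F y + α)

theorem waterTrunc_mono {F : ℝ → ℝ} {α β : ℝ} (hαβ : α ≤ β) (y : ℝ) :
    waterTrunc F α y ≤ waterTrunc F β y :=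
  min_le_min le_rfl (by linarith)

theorem waterTrunc_le_add_dist (F : ℝ → ℝ) (α β y : ℝ) :
    waterTrunc F β y ≤ waterTrunc F α y + dist β α := by
  rw [waterTrunc, waterTrunc, ← min_add_add_right]
  refine min_le_min (le_add_of_nonneg_right dist_nonneg) ?_
  linarith [le_abs_self (β - α), Real.dist_eq β α]

section Water

variable {F : ℝ → ℝ} (hd : ∀ x, F (x + 1) = F x + 1) (hc : Continuous F)
include hd hc

theorem continuous_waterTrunc (α : ℝ) : Continuous (waterTrunc F α) :=
  hc.min ((continuous_lowerLift hd hc).add continuous_const)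

theorem waterTrunc_add_one (α y : ℝ) : waterTrunc F α (y + 1) = waterTrunc F α y + 1 := by
  rw [waterTrunc, waterTrunc, hd, lowerLift_add_one hd hc, add_right_comm _ 1, min_add_add_right]

theorem water_le_add_dist (α β x : ℝ) : water F β x ≤ water F α x + dist β α :=
  upperLift_le_upperLift_add (waterTrunc_le_add_dist F α β)
    (bddAbove_image_Iic (waterTrunc_add_one hd hc α) (continuous_waterTrunc hd hc α) x)

theorem water_le_water {α β : ℝ} (hαβ : α ≤ β) (x : ℝ) : water F α x ≤ water F β x :=
  (upperLift_le_upperLift_add (fun y => (waterTrunc_mono hαβ y).trans (add_zero _).ge)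
    (bddAbove_image_Iic (waterTrunc_add_one hd hc β) (continuous_waterTrunc hd hc β) x)).trans_eq
    (add_zero _)

theorem continuous_water_uncurry : Continuous fun p : ℝ × ℝ => water F p.1 p.2 :=
  continuous_prod_of_continuous_lipschitzWith _ 1
    (fun α => continuous_upperLift (waterTrunc_add_one hd hc α) (continuous_waterTrunc hd hc α))
    (fun x => LipschitzWith.of_le_add fun β α => water_le_add_dist hd hc α β x)

theorem continuous_water_iterate (n : ℕ) (x : ℝ) : Continuous fun α => (water F α)^[n] x := by
  induction n with
  | zero => exact continuous_const
  | succ n ih =>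
    simp only [iterate_succ_apply']
    exact (continuous_water_uncurry hd hc).comp (continuous_id.prodMk ih)

noncomputable def waterLift (α : ℝ) : CircleDeg1Lift where
  toFun := water F α
  monotone' := monotone_upperLift (waterTrunc_add_one hd hc α) (continuous_waterTrunc hd hc α)
  map_add_one' := upperLift_add_one (waterTrunc_add_one hd hc α) (continuous_waterTrunc hd hc α)

@[simp]
theorem coe_waterLift (α : ℝ) : ⇑(waterLift hd hc α) = water F α := rfl

theorem waterLift_mono : Monotone (waterLift hd hc) := fun _ _ hαβ =>
  water_le_water hd hc hαβ

theorem continuous_translationNumber_waterLift :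
    Continuous fun α => (waterLift hd hc α).translationNumber :=
  continuous_translationNumber_comp fun n => by
    simpa only [coe_pow, coe_waterLift] using continuous_water_iterate hd hc n 0

theorem supDiff_nonneg : 0 ≤ supDiff F :=
  Real.iSup_nonneg fun x => sub_nonneg.2 (lowerLift_le hd hc x)

end Water

theorem water_rotation_number_onto (F : ℝ → ℝ) (hFc : Continuous F)
    (hFd : ∀ x : ℝ, F (x + 1) = F x + 1) (rot : ℝ → ℝ)
    (hrot : ∀ α ∈ Set.Icc 0 (supDiff F), ∀ x : ℝ,
      Tendsto (fun n : ℕ => ((water F α)^[n] x - x) / n) atTop (nhds (rot α))) :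
    ContinuousOn rot (Set.Icc 0 (supDiff F)) ∧
    MonotoneOn rot (Set.Icc 0 (supDiff F)) ∧
    rot '' Set.Icc 0 (supDiff F) = Set.Icc (rot 0) (rot (supDiff F)) ∧
    ∀ ρ ∈ Set.Icc (rot 0) (rot (supDiff F)),
      ∃ α ∈ Set.Icc 0 (supDiff F), rot α = ρ := by
  have hτ : EqOn rot (fun α => (waterLift hFd hFc α).translationNumber) (Icc 0 (supDiff F)) :=
    fun α hα => tendsto_nhds_unique (hrot α hα 0) <| by
      simpa only [coe_pow, coe_waterLift] using (waterLift hFd hFc α).tendsto_translationNumber 0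
  have hmono : MonotoneOn rot (Icc 0 (supDiff F)) := fun α hα β hβ hαβ => by
    rw [hτ hα, hτ hβ]
    exact translationNumber_mono (waterLift_mono hFd hFc hαβ)
  have hcont : ContinuousOn rot (Icc 0 (supDiff F)) :=
    (continuous_translationNumber_waterLift hFd hFc).continuousOn.congr hτ
  have himage := hcont.image_Icc_of_monotoneOn (supDiff_nonneg hFd hFc) hmono
  exact ⟨hcont, hmono, himage, fun ρ hρ => by rwa [← himage] at hρ⟩
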